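/- For all finite-dimensional complex Hilbert spaces H₁, H₂, H₁', H₂' and all states ρ on H₁ ⊗ H₂ and ρ' on H₁' ⊗ H₂', one has the subadditivity inequality E_m(ρ ⊗ ρ') ≤ E_m(ρ) + E_m(ρ'), where E_m of ρ ⊗ ρ' is computed across the (H₁⊗H₁')–(H₂⊗H₂') cut after the canonical reordering of tensor factors. -/

import Mathlib

open Matrix Kronecker BigOperators ComplexOrder

noncomputable section

namespace QAdditivity

/-- von Neumann entropy of a matrix (junk value `0` if not Hermitian):
`S(ρ) = -∑ᵢ λᵢ log λᵢ` over the eigenvalues of `ρ`. -/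
def entropy {ι : Type} [Fintype ι] [DecidableEq ι] (ρ : Matrix ι ι ℂ) : ℝ :=
  if h : ρ.IsHermitian then ∑ i, Real.negMulLog (h.eigenvalues i) else 0

/-- A state: positive semidefinite with trace one. -/
def IsState {ι : Type} [Fintype ι] (ρ : Matrix ι ι ℂ) : Prop :=
  ρ.PosSemidef ∧ ρ.trace = 1

/-- A pure state: rank-one state, i.e. `|φ⟩⟨φ|` for a unit vector `φ`. -/
def IsPureState {ι : Type} [Fintype ι] (ρ : Matrix ι ι ℂ) : Prop :=
  ∃ φ : ι → ℂ, star φ ⬝ᵥ φ = 1 ∧ ρ = vecMulVec φ (star φ)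

/-- Partial trace over the second tensor factor. -/
def trRight {ι κ : Type} [Fintype ι] [Fintype κ]
    (ρ : Matrix (ι × κ) (ι × κ) ℂ) : Matrix ι ι ℂ :=
  Matrix.of fun i j => ∑ k, ρ (i, k) (j, k)

/-- Partial trace over the first tensor factor. -/
def trLeft {ι κ : Type} [Fintype ι] [Fintype κ]
    (ρ : Matrix (ι × κ) (ι × κ) ℂ) : Matrix κ κ ℂ :=
  Matrix.of fun k l => ∑ i, ρ (i, k) (i, l)

/-- Entanglement of a (pure) bipartite state: `E(π) = S(tr_{H₂} π)`. -/
def pureEnt {ι κ : Type} [Fintype ι] [Fintype κ] [DecidableEq ι]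
    (π : Matrix (ι × κ) (ι × κ) ℂ) : ℝ :=
  entropy (trRight π)

/-- `E_m(ρ)`: minimum over finite pure-state ensembles for `ρ` of the minimal
entanglement appearing in the ensemble. -/
def Em {ι κ : Type} [Fintype ι] [Fintype κ] [DecidableEq ι]
    (ρ : Matrix (ι × κ) (ι × κ) ℂ) : ℝ :=
  sInf { e : ℝ | ∃ (n : ℕ) (p : Fin (n + 1) → ℝ)
      (π : Fin (n + 1) → Matrix (ι × κ) (ι × κ) ℂ),
    (∀ i, 0 < p i) ∧ (∀ i, IsPureState (π i)) ∧
    (∑ i, (p i : ℂ) • π i) = ρ ∧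
    e = Finset.univ.inf' Finset.univ_nonempty fun i => pureEnt (π i) }

/-- Entanglement of formation `E_f(ρ)`. -/
def Ef {ι κ : Type} [Fintype ι] [Fintype κ] [DecidableEq ι]
    (ρ : Matrix (ι × κ) (ι × κ) ℂ) : ℝ :=
  sInf { e : ℝ | ∃ (n : ℕ) (p : Fin (n + 1) → ℝ)
      (π : Fin (n + 1) → Matrix (ι × κ) (ι × κ) ℂ),
    (∀ i, 0 < p i) ∧ (∀ i, IsPureState (π i)) ∧
    (∑ i, (p i : ℂ) • π i) = ρ ∧
    e = ∑ i, p i * pureEnt (π i) }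

/-- Canonical reordering `(H₁⊗H₂)⊗(H₁'⊗H₂') ≃ (H₁⊗H₁')⊗(H₂⊗H₂')` on matrices. -/
def reorder {a b a' b' : Type}
    (M : Matrix ((a × b) × (a' × b')) ((a × b) × (a' × b')) ℂ) :
    Matrix ((a × a') × (b × b')) ((a × a') × (b × b')) ℂ :=
  Matrix.reindex (Equiv.prodProdProdComm a b a' b') (Equiv.prodProdProdComm a b a' b') M

/-- Complete positivity of a superoperator. -/
def IsCompletelyPositive {κ η : Type} [Fintype κ] [Fintype η]
    (f : Matrix κ κ ℂ → Matrix η η ℂ) : Prop :=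
  ∀ (n : ℕ) (M : Matrix (κ × Fin n) (κ × Fin n) ℂ), M.PosSemidef →
    Matrix.PosSemidef (Matrix.of fun p q : η × Fin n =>
      f (Matrix.of fun a b => M (a, p.2) (b, q.2)) p.1 q.1)

/-- A quantum channel: a completely positive trace preserving linear map. -/
def IsChannel {κ η : Type} [Fintype κ] [Fintype η]
    (f : Matrix κ κ ℂ → Matrix η η ℂ) : Prop :=
  IsLinearMap ℂ f ∧ IsCompletelyPositive f ∧ ∀ M, (f M).trace = M.trace

/-- Minimum output entropy of a channel. -/
def Smin {κ η : Type} [Fintype κ] [Fintype η] [DecidableEq η]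
    (f : Matrix κ κ ℂ → Matrix η η ℂ) : ℝ :=
  sInf { e : ℝ | ∃ ρ : Matrix κ κ ℂ, IsState ρ ∧ e = entropy (f ρ) }

/-- The tensor product `Λ ⊗ Λ'` of two superoperators (defined on all of
`B(K ⊗ K')` by linearity via matrix units). -/
def tensorChannel {κ η κ' η' : Type} [Fintype κ] [Fintype κ']
    [DecidableEq κ] [DecidableEq κ']
    (f : Matrix κ κ ℂ → Matrix η η ℂ) (g : Matrix κ' κ' ℂ → Matrix η' η' ℂ) :
    Matrix (κ × κ') (κ × κ') ℂ → Matrix (η × η') (η × η') ℂ :=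
  fun M => Matrix.of fun p q =>
    ∑ a, ∑ b, ∑ a', ∑ b', M (a, a') (b, b') *
      f (Matrix.single a b 1) p.1 q.1 *
      g (Matrix.single a' b' 1) p.2 q.2

/-- Support of an operator: its range. -/
def supp {ι : Type} [Fintype ι] (ρ : Matrix ι ι ℂ) : Submodule ℂ (ι → ℂ) :=
  LinearMap.range ρ.mulVecLin

/-!
If `{pᵢ, πᵢ}` and `{qⱼ, σⱼ}` are pure-state ensembles of `ρ` and `ρ'`, then `{pᵢ qⱼ, πᵢ ⊗ σⱼ}`
(after reordering the factors) is a pure-state ensemble of `ρ ⊗ ρ'`. The reduced state of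
`πᵢ ⊗ σⱼ` is the tensor product of the reduced states of `πᵢ` and `σⱼ`, and von Neumann entropy
is additive on tensor products of states, because the eigenvalues of `A ⊗ B` are the products of
those of `A` and `B` and both spectra sum to one. Hence `E(πᵢ ⊗ σⱼ) = E(πᵢ) + E(σⱼ)`, and
choosing `i`, `j` minimising the entanglement gives
`E_m(ρ ⊗ ρ') ≤ minᵢ E(πᵢ) + minⱼ E(σⱼ)` for every pair of ensembles. Since states have
ensembles (their spectral decompositions), the infima defining `E_m(ρ)` and `E_m(ρ')` are over
nonempty sets, and taking them yields the inequality.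
-/

section Hermitian

variable {m n : Type} [Fintype m] [Fintype n] [DecidableEq m] [DecidableEq n]

theorem _root_.Matrix.IsHermitian.sum_eigenvalues_eq_one {A : Matrix n n ℂ} (hA : A.IsHermitian)
    (htr : A.trace = 1) : ∑ i, hA.eigenvalues i = 1 := by
  simpa [htr] using (congrArg Complex.re hA.trace_eq_sum_eigenvalues).symm

theorem _root_.Matrix.IsHermitian.eq_sum_smul_vecMulVec {A : Matrix n n ℂ} (hA : A.IsHermitian) :
    A = ∑ i, (hA.eigenvalues i : ℂ) • vecMulVec ((hA.eigenvectorUnitary : Matrix n n ℂ)ᵀ i)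
      (star ((hA.eigenvectorUnitary : Matrix n n ℂ)ᵀ i)) := by
  conv_lhs => rw [hA.spectral_theorem, Unitary.conjStarAlgAut_apply]
  ext j k
  rw [Matrix.mul_apply]
  simp only [Matrix.mul_diagonal, Matrix.sum_apply, Matrix.smul_apply, vecMulVec_apply,
    transpose_apply, Pi.star_apply, smul_eq_mul, Matrix.star_apply, Function.comp_apply,
    RCLike.ofReal_eq_complex_ofReal]
  refine Finset.sum_congr rfl fun i _ => ?_
  ring

theorem _root_.Matrix.IsHermitian.star_dotProduct_eigenvectorUnitary_transpose
    {A : Matrix n n ℂ} (hA : A.IsHermitian) (i : n) :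
    star ((hA.eigenvectorUnitary : Matrix n n ℂ)ᵀ i) ⬝ᵥ (hA.eigenvectorUnitary : Matrix n n ℂ)ᵀ i
      = 1 := by
  simpa [Matrix.mul_apply, dotProduct, Matrix.one_apply] using
    congrFun (congrFun (mem_unitaryGroup_iff'.mp hA.eigenvectorUnitary.2) i) i

open Polynomial in
theorem _root_.Matrix.IsHermitian.charpoly_kronecker {A : Matrix m m ℂ} {B : Matrix n n ℂ}
    (hA : A.IsHermitian) (hB : B.IsHermitian) :
    (A ⊗ₖ B).charpoly =
      ∏ p : m × n, (X - C ((hA.eigenvalues p.1 * hB.eigenvalues p.2 : ℝ) : ℂ)) := by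
  set U : Matrix m m ℂ := ↑hA.eigenvectorUnitary
  set V : Matrix n n ℂ := ↑hB.eigenvectorUnitary
  have hUV : star (U ⊗ₖ V) * (U ⊗ₖ V) = 1 :=
    (kronecker_mem_unitary hA.eigenvectorUnitary.2 hB.eigenvectorUnitary.2).1
  conv_lhs => rw [hA.spectral_theorem, hB.spectral_theorem, Unitary.conjStarAlgAut_apply,
    Unitary.conjStarAlgAut_apply, mul_kronecker_mul, mul_kronecker_mul]
  rw [star_eq_conjTranspose, star_eq_conjTranspose, ← conjTranspose_kronecker,
    ← star_eq_conjTranspose, charpoly_mul_comm, ← mul_assoc, hUV, one_mul,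
    diagonal_kronecker_diagonal, charpoly_diagonal]
  simp

open Polynomial in
theorem entropy_eq_sum_of_charpoly_eq {A : Matrix n n ℂ} (hA : A.IsHermitian) {d : n → ℝ}
    (h : A.charpoly = ∏ i, (X - C (d i : ℂ))) :
    entropy A = ∑ i, Real.negMulLog (d i) := by
  have hroots := hA.roots_charpoly_eq_eigenvalues
  rw [h, roots_prod _ _ (by simp [Finset.prod_ne_zero_iff, X_sub_C_ne_zero])] at hroots
  rw [entropy, dif_pos hA]
  simpa [Multiset.map_map, Function.comp_def] using
    congrArg (fun s => (s.map fun z : ℂ => Real.negMulLog z.re).sum) hroots.symm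

theorem entropy_kronecker {A : Matrix m m ℂ} {B : Matrix n n ℂ} (hA : A.IsHermitian)
    (hB : B.IsHermitian) (htrA : A.trace = 1) (htrB : B.trace = 1) :
    entropy (A ⊗ₖ B) = entropy A + entropy B := by
  have hAB : (A ⊗ₖ B).IsHermitian := by
    rw [IsHermitian, conjTranspose_kronecker, hA.eq, hB.eq]
  rw [entropy_eq_sum_of_charpoly_eq hAB (hA.charpoly_kronecker hB), entropy, dif_pos hA,
    entropy, dif_pos hB, Fintype.sum_prod_type]
  simp only [Real.negMulLog_mul, Finset.sum_add_distrib, ← Finset.sum_mul, ← Finset.mul_sum,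
    hA.sum_eigenvalues_eq_one htrA, hB.sum_eigenvalues_eq_one htrB, one_mul]

theorem IsState.entropy_nonneg {ρ : Matrix n n ℂ} (hρ : IsState ρ) : 0 ≤ entropy ρ := by
  obtain ⟨hpsd, htr⟩ := hρ
  rw [entropy, dif_pos hpsd.1]
  refine Finset.sum_nonneg fun i _ => Real.negMulLog_nonneg (hpsd.eigenvalues_nonneg i) ?_
  exact hpsd.1.sum_eigenvalues_eq_one htr ▸
    Finset.single_le_sum (fun j _ => hpsd.eigenvalues_nonneg j) (Finset.mem_univ i)

end Hermitian

theorem IsState.ne_zero {n : Type} [Fintype n] {ρ : Matrix n n ℂ} (hρ : IsState ρ) : ρ ≠ 0 := by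
  rintro rfl
  simpa using hρ.2

section PureState

variable {a b a' b' : Type} [Fintype a] [Fintype b] [Fintype a'] [Fintype b']

theorem trace_reorder (M : Matrix ((a × b) × (a' × b')) ((a × b) × (a' × b')) ℂ) :
    (reorder M).trace = M.trace :=
  Equiv.sum_comp (Equiv.prodProdProdComm a b a' b').symm fun x => M x x

theorem trRight_reorder_kronecker (M : Matrix (a × b) (a × b) ℂ)
    (N : Matrix (a' × b') (a' × b') ℂ) :
    trRight (reorder (M ⊗ₖ N)) = trRight M ⊗ₖ trRight N := by
  ext ⟨i, i'⟩ ⟨j, j'⟩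
  simp only [trRight, reorder, reindex_apply, submatrix_apply, kroneckerMap_apply, of_apply,
    Fintype.sum_prod_type, Finset.sum_mul_sum]
  rfl

theorem IsPureState.isState_trRight {π : Matrix (a × b) (a × b) ℂ} (hπ : IsPureState π) :
    IsState (trRight π) := by
  obtain ⟨φ, hφ, rfl⟩ := hπ
  set Φ : Matrix a b ℂ := Matrix.of fun i k => φ (i, k)
  have hΦ : trRight (vecMulVec φ (star φ)) = Φ * Φᴴ := by
    ext i j
    simp [Φ, trRight, vecMulVec_apply, Matrix.mul_apply]
  refine ⟨hΦ ▸ posSemidef_self_mul_conjTranspose Φ, ?_⟩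
  rw [← hφ, dotProduct_comm, ← trace_vecMulVec, trace, trace, Fintype.sum_prod_type]
  rfl

theorem IsPureState.pureEnt_nonneg [DecidableEq a] {π : Matrix (a × b) (a × b) ℂ}
    (hπ : IsPureState π) : 0 ≤ pureEnt π :=
  hπ.isState_trRight.entropy_nonneg

theorem IsPureState.reorder_kronecker {π : Matrix (a × b) (a × b) ℂ}
    {π' : Matrix (a' × b') (a' × b') ℂ} (hπ : IsPureState π) (hπ' : IsPureState π') :
    IsPureState (reorder (π ⊗ₖ π')) := by
  obtain ⟨φ, hφ, rfl⟩ := hπ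
  obtain ⟨ψ, hψ, rfl⟩ := hπ'
  set χ : (a × a') × (b × b') → ℂ := fun x => φ (x.1.1, x.2.1) * ψ (x.1.2, x.2.2)
  have hχ : reorder (vecMulVec φ (star φ) ⊗ₖ vecMulVec ψ (star ψ)) = vecMulVec χ (star χ) := by
    ext x y
    simp only [reorder, reindex_apply, submatrix_apply, kroneckerMap_apply, vecMulVec_apply,
      Pi.star_apply, star_mul', χ, Equiv.prodProdProdComm_symm, Equiv.prodProdProdComm_apply]
    ring
  refine ⟨χ, ?_, hχ⟩
  rw [dotProduct_comm, ← trace_vecMulVec, ← hχ, trace_reorder, trace_kronecker, trace_vecMulVec,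
    trace_vecMulVec, dotProduct_comm, hφ, dotProduct_comm, hψ, one_mul]

theorem IsPureState.pureEnt_reorder_kronecker [DecidableEq a] [DecidableEq a']
    {π : Matrix (a × b) (a × b) ℂ} {π' : Matrix (a' × b') (a' × b') ℂ}
    (hπ : IsPureState π) (hπ' : IsPureState π') :
    pureEnt (reorder (π ⊗ₖ π')) = pureEnt π + pureEnt π' := by
  obtain ⟨hpsd, htr⟩ := hπ.isState_trRight
  obtain ⟨hpsd', htr'⟩ := hπ'.isState_trRight
  rw [pureEnt, trRight_reorder_kronecker, entropy_kronecker hpsd.1 hpsd'.1 htr htr']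
  rfl

end PureState

def IsPureEnsemble {ι κ : Type} [Fintype ι] [Fintype κ]
    (p : ι → ℝ) (π : ι → Matrix κ κ ℂ) (ρ : Matrix κ κ ℂ) : Prop :=
  (∀ i, 0 < p i) ∧ (∀ i, IsPureState (π i)) ∧ ∑ i, (p i : ℂ) • π i = ρ

section Ensemble

variable {ι ι' κ : Type} [Fintype ι] [Fintype ι'] [Fintype κ]

theorem IsPureEnsemble.comp_equiv {p : ι → ℝ} {π : ι → Matrix κ κ ℂ} {ρ : Matrix κ κ ℂ}
    (h : IsPureEnsemble p π ρ) (e : ι' ≃ ι) : IsPureEnsemble (p ∘ e) (π ∘ e) ρ :=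
  ⟨fun i => h.1 (e i), fun i => h.2.1 (e i), (e.sum_comp fun i => (p i : ℂ) • π i).trans h.2.2⟩

theorem IsPureEnsemble.exists_fin [Nonempty ι] {p : ι → ℝ} {π : ι → Matrix κ κ ℂ}
    {ρ : Matrix κ κ ℂ} (h : IsPureEnsemble p π ρ) :
    ∃ (n : ℕ) (e : Fin (n + 1) ≃ ι), IsPureEnsemble (p ∘ e) (π ∘ e) ρ :=
  ⟨_, (finCongr (Nat.sub_add_cancel Fintype.card_pos)).trans (Fintype.equivFin ι).symm,
    h.comp_equiv _⟩

theorem IsPureEnsemble.reorder_kronecker {a b a' b' : Type}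
    [Fintype a] [Fintype b] [Fintype a'] [Fintype b']
    {p : ι → ℝ} {π : ι → Matrix (a × b) (a × b) ℂ} {ρ : Matrix (a × b) (a × b) ℂ}
    {q : ι' → ℝ} {σ : ι' → Matrix (a' × b') (a' × b') ℂ} {ρ' : Matrix (a' × b') (a' × b') ℂ}
    (h : IsPureEnsemble p π ρ) (h' : IsPureEnsemble q σ ρ') :
    IsPureEnsemble (fun x : ι × ι' => p x.1 * q x.2) (fun x => reorder (π x.1 ⊗ₖ σ x.2))
      (reorder (ρ ⊗ₖ ρ')) := by
  refine ⟨fun x => mul_pos (h.1 x.1) (h'.1 x.2),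
    fun x => (h.2.1 x.1).reorder_kronecker (h'.2.1 x.2), ?_⟩
  rw [← h.2.2, ← h'.2.2]
  ext x y
  simp only [reorder, reindex_apply, submatrix_apply, Matrix.sum_apply, Matrix.smul_apply,
    kroneckerMap_apply, smul_eq_mul, Complex.ofReal_mul, Fintype.sum_prod_type,
    Finset.sum_mul_sum]
  refine Finset.sum_congr rfl fun i _ => Finset.sum_congr rfl fun j _ => ?_
  ring

theorem exists_isPureEnsemble {ρ : Matrix κ κ ℂ} (hρ : ρ.PosSemidef) (hρ0 : ρ ≠ 0) :
    ∃ (n : ℕ) (p : Fin (n + 1) → ℝ) (π : Fin (n + 1) → Matrix κ κ ℂ), IsPureEnsemble p π ρ := by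
  classical
  set μ := hρ.1.eigenvalues
  set u := (hρ.1.eigenvectorUnitary : Matrix κ κ ℂ)ᵀ
  have hpos : Nonempty {i // 0 < μ i} := by
    by_contra hempty
    refine hρ0 (hρ.1.eigenvalues_eq_zero_iff.1 (funext fun i => ?_))
    exact le_antisymm (not_lt.1 fun hi => hempty ⟨⟨i, hi⟩⟩) (hρ.eigenvalues_nonneg i)
  have hens : IsPureEnsemble (fun i : {i // 0 < μ i} => μ i)
      (fun i => vecMulVec (u i) (star (u i))) ρ := by
    refine ⟨fun i => i.2,
      fun i => ⟨u i, hρ.1.star_dotProduct_eigenvectorUnitary_transpose i, rfl⟩, ?_⟩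
    rw [← Finset.sum_subtype (Finset.univ.filter fun i => 0 < μ i) (by simp)
      (fun i => (μ i : ℂ) • vecMulVec (u i) (star (u i))), Finset.sum_filter_of_ne]
    · exact hρ.1.eq_sum_smul_vecMulVec.symm
    · intro i _ hi
      exact (hρ.eigenvalues_nonneg i).lt_of_ne' fun h0 => hi (by
        rw [show μ i = 0 from h0, Complex.ofReal_zero, zero_smul])
  obtain ⟨n, e, he⟩ := hens.exists_fin
  exact ⟨n, _, _, he⟩

end Ensemble

section Em

variable {ι ι' a b a' b' : Type} [Fintype ι] [Fintype ι'] [Fintype a] [Fintype b] [Fintype a']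
  [Fintype b'] [DecidableEq a] [DecidableEq a']

theorem Em_le_pureEnt {p : ι → ℝ} {π : ι → Matrix (a × b) (a × b) ℂ}
    {ρ : Matrix (a × b) (a × b) ℂ} (h : IsPureEnsemble p π ρ) (i : ι) : Em ρ ≤ pureEnt (π i) := by
  have : Nonempty ι := ⟨i⟩
  obtain ⟨n, e, hp, hπ, hsum⟩ := h.exists_fin
  have hbdd : BddBelow {e : ℝ | ∃ (n : ℕ) (p : Fin (n + 1) → ℝ)
      (π : Fin (n + 1) → Matrix (a × b) (a × b) ℂ),
      (∀ i, 0 < p i) ∧ (∀ i, IsPureState (π i)) ∧ (∑ i, (p i : ℂ) • π i) = ρ ∧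
      e = Finset.univ.inf' Finset.univ_nonempty fun i => pureEnt (π i)} := by
    refine ⟨0, ?_⟩
    rintro _ ⟨n, p, π, -, hπ, -, rfl⟩
    exact Finset.le_inf' _ _ fun i _ => (hπ i).pureEnt_nonneg
  calc Em ρ ≤ Finset.univ.inf' Finset.univ_nonempty fun j => pureEnt (π (e j)) :=
        csInf_le hbdd ⟨_, _, _, hp, hπ, hsum, rfl⟩
    _ ≤ pureEnt (π i) := Finset.inf'_le_of_le _ (Finset.mem_univ (e.symm i)) (by simp)

theorem le_Em {ρ : Matrix (a × b) (a × b) ℂ} (hρ : ρ.PosSemidef) (hρ0 : ρ ≠ 0) {c : ℝ}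
    (h : ∀ (n : ℕ) (p : Fin (n + 1) → ℝ) (π : Fin (n + 1) → Matrix (a × b) (a × b) ℂ),
      IsPureEnsemble p π ρ → c ≤ Finset.univ.inf' Finset.univ_nonempty fun i => pureEnt (π i)) :
    c ≤ Em ρ := by
  obtain ⟨n, p, π, hp, hπ, hsum⟩ := exists_isPureEnsemble hρ hρ0
  refine le_csInf ⟨_, n, p, π, hp, hπ, hsum, rfl⟩ ?_
  rintro _ ⟨n, p, π, hp, hπ, hsum, rfl⟩
  exact h n p π ⟨hp, hπ, hsum⟩

theorem Em_reorder_kronecker_le [Nonempty ι] [Nonempty ι'] {p : ι → ℝ}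
    {π : ι → Matrix (a × b) (a × b) ℂ} {ρ : Matrix (a × b) (a × b) ℂ} {q : ι' → ℝ}
    {σ : ι' → Matrix (a' × b') (a' × b') ℂ} {ρ' : Matrix (a' × b') (a' × b') ℂ}
    (h : IsPureEnsemble p π ρ) (h' : IsPureEnsemble q σ ρ') :
    Em (reorder (ρ ⊗ₖ ρ')) ≤ (Finset.univ.inf' Finset.univ_nonempty fun i => pureEnt (π i)) +
      Finset.univ.inf' Finset.univ_nonempty fun j => pureEnt (σ j) := by
  obtain ⟨i, -, hi⟩ := Finset.exists_mem_eq_inf' Finset.univ_nonempty fun i => pureEnt (π i)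
  obtain ⟨j, -, hj⟩ := Finset.exists_mem_eq_inf' Finset.univ_nonempty fun j => pureEnt (σ j)
  rw [hi, hj, ← (h.2.1 i).pureEnt_reorder_kronecker (h'.2.1 j)]
  exact Em_le_pureEnt (h.reorder_kronecker h') (i, j)

end Em

theorem Em_subadditive_general
    {a b a' b' : Type} [Fintype a] [Fintype b] [Fintype a'] [Fintype b']
    [DecidableEq a] [DecidableEq a']
    (ρ : Matrix (a × b) (a × b) ℂ) (ρ' : Matrix (a' × b') (a' × b') ℂ)
    (hρ : IsState ρ) (hρ' : IsState ρ') :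
    Em (reorder (ρ ⊗ₖ ρ')) ≤ Em ρ + Em ρ' := by
  have key : Em (reorder (ρ ⊗ₖ ρ')) - Em ρ' ≤ Em ρ := by
    refine le_Em hρ.1 hρ.ne_zero fun n p π h => sub_le_comm.1 ?_
    refine le_Em hρ'.1 hρ'.ne_zero fun m q σ h' => sub_le_iff_le_add'.2 ?_
    exact Em_reorder_kronecker_le h h'
  linarith

/-- Subadditivity of `E_m` on tensor products of states. -/
theorem Em_subadditive
    {a b a' b' : Type} [Fintype a] [Fintype b] [Fintype a'] [Fintype b']
    [DecidableEq a] [DecidableEq b] [DecidableEq a'] [DecidableEq b']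
    (ρ : Matrix (a × b) (a × b) ℂ) (ρ' : Matrix (a' × b') (a' × b') ℂ)
    (hρ : IsState ρ) (hρ' : IsState ρ') :
    Em (reorder (ρ ⊗ₖ ρ')) ≤ Em ρ + Em ρ' :=
  Em_subadditive_general ρ ρ' hρ hρ'

end QAdditivity
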